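/- Let X be a Banach space and M, N, L closed subspaces of X such that L is complemented in both M and N, with M = L ⊕ M₁ and N = L ⊕ N₁ for closed subspaces M₁, N₁. Then M and N have a common complement in X if and only if M₁ and N₁ have a common complement K in X such that L is complemented in K. -/

import Mathlib

/-!
Since `L ≤ M = L ⊕ M₁`, modularity of the lattice of submodules gives
`M ⊕ K = X ↔ L ⊓ K = ⊥ ∧ M₁ ⊕ (L ⊔ K) = X`, and likewise for `N`. Hence `K ↦ L ⊔ K` turns a common
complement of `M, N` into one of `M₁, N₁` containing `L` as a complemented subspace, and conversely
`K = L ⊕ K'` yields the common complement `K'`. The only analytic point is that `L ⊔ K` is closed: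
it is the preimage of `L` under the projection onto `M` along `K`, which is continuous by the open
mapping theorem.
-/

namespace Submodule

variable {R E : Type*} [Ring R] [TopologicalSpace E] [AddCommGroup E] [Module R E]

theorem IsTopCompl.isClosed_sup {p q L : Submodule R E} (h : IsTopCompl p q)
    (hL : IsClosed (L : Set E)) (hLp : L ≤ p) : IsClosed ((L ⊔ q : Submodule R E) : Set E) := by
  set P := p.projectionL q h
  have hPL : L.map (P : E →ₗ[R] E) = L := by
    have hP : ∀ x ∈ L, P x = x := fun x hx ↦ projectionL_apply_left h ⟨x, hLp hx⟩
    ext x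
    refine ⟨?_, fun hx ↦ ⟨x, hx, hP x hx⟩⟩
    rintro ⟨y, hy, rfl⟩
    exact (hP y hy).symm ▸ hy
  have hLq : L ⊔ q = L.comap (P : E →ₗ[R] E) := by
    conv_rhs => rw [← hPL, comap_map_eq]
    exact congrArg (L ⊔ ·) (ker_projectionL h).symm
  rw [hLq]
  exact hL.preimage P.continuous

end Submodule

theorem isCompl_sup_left_iff {α : Type*} [Lattice α] [BoundedOrder α] [IsModularLattice α]
    {a b c : α} (hab : Disjoint a b) :
    IsCompl (a ⊔ b) c ↔ Disjoint a c ∧ IsCompl b (a ⊔ c) := by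
  refine ⟨fun h ↦ ⟨h.disjoint.mono_left le_sup_left, ?_⟩, fun ⟨hac, h⟩ ↦ ?_⟩
  · exact hab.symm.isCompl_sup_right_of_isCompl_sup_left (sup_comm a b ▸ h)
  · exact sup_comm b a ▸ hac.isCompl_sup_left_of_isCompl_sup_right h

theorem stmt_4_general {X : Type*} [NormedAddCommGroup X] [NormedSpace ℝ X] [CompleteSpace X]
    (M N L M₁ N₁ : Submodule ℝ X)
    (hM : IsClosed (M : Set X)) (hL : IsClosed (L : Set X))
    (hdM : L ⊓ M₁ = ⊥) (hsM : L ⊔ M₁ = M) (hdN : L ⊓ N₁ = ⊥) (hsN : L ⊔ N₁ = N) :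
    (∃ K : Submodule ℝ X, IsClosed (K : Set X) ∧
        M ⊓ K = ⊥ ∧ M ⊔ K = ⊤ ∧ N ⊓ K = ⊥ ∧ N ⊔ K = ⊤) ↔
      (∃ K : Submodule ℝ X, IsClosed (K : Set X) ∧
        M₁ ⊓ K = ⊥ ∧ M₁ ⊔ K = ⊤ ∧ N₁ ⊓ K = ⊥ ∧ N₁ ⊔ K = ⊤ ∧
        ∃ K' : Submodule ℝ X, IsClosed (K' : Set X) ∧ L ⊓ K' = ⊥ ∧ L ⊔ K' = K) := by
  have hLM₁ : Disjoint L M₁ := disjoint_iff.mpr hdM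
  have hLN₁ : Disjoint L N₁ := disjoint_iff.mpr hdN
  subst hsM hsN
  constructor
  · rintro ⟨K, hK, hMK, hMK', hNK, hNK'⟩
    have hMc := IsCompl.of_eq hMK hMK'
    obtain ⟨hLK, hM₁⟩ := (isCompl_sup_left_iff hLM₁).mp hMc
    obtain ⟨-, hN₁⟩ := (isCompl_sup_left_iff hLN₁).mp (.of_eq hNK hNK')
    refine ⟨L ⊔ K, ?_, hM₁.inf_eq_bot, hM₁.sup_eq_top, hN₁.inf_eq_bot, hN₁.sup_eq_top,
      K, hK, hLK.eq_bot, rfl⟩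
    exact (Submodule.IsCompl.isTopCompl_of_isClosed hMc hM hK).isClosed_sup hL le_sup_left
  · rintro ⟨_, -, hM₁K, hM₁K', hN₁K, hN₁K', K', hK', hLK', rfl⟩
    have hLK'd : Disjoint L K' := disjoint_iff.mpr hLK'
    have hM := (isCompl_sup_left_iff hLM₁).mpr ⟨hLK'd, .of_eq hM₁K hM₁K'⟩
    have hN := (isCompl_sup_left_iff hLN₁).mpr ⟨hLK'd, .of_eq hN₁K hN₁K'⟩
    exact ⟨K', hK', hM.inf_eq_bot, hM.sup_eq_top, hN.inf_eq_bot, hN.sup_eq_top⟩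

theorem stmt_4 {X : Type*} [NormedAddCommGroup X] [NormedSpace ℝ X] [CompleteSpace X]
    (M N L M₁ N₁ : Submodule ℝ X)
    (hM : IsClosed (M : Set X)) (hN : IsClosed (N : Set X)) (hL : IsClosed (L : Set X))
    (hM₁ : IsClosed (M₁ : Set X)) (hN₁ : IsClosed (N₁ : Set X))
    (hdM : L ⊓ M₁ = ⊥) (hsM : L ⊔ M₁ = M) (hdN : L ⊓ N₁ = ⊥) (hsN : L ⊔ N₁ = N) :
    (∃ K : Submodule ℝ X, IsClosed (K : Set X) ∧
        M ⊓ K = ⊥ ∧ M ⊔ K = ⊤ ∧ N ⊓ K = ⊥ ∧ N ⊔ K = ⊤) ↔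
      (∃ K : Submodule ℝ X, IsClosed (K : Set X) ∧
        M₁ ⊓ K = ⊥ ∧ M₁ ⊔ K = ⊤ ∧ N₁ ⊓ K = ⊥ ∧ N₁ ⊔ K = ⊤ ∧
        ∃ K' : Submodule ℝ X, IsClosed (K' : Set X) ∧ L ⊓ K' = ⊥ ∧ L ⊔ K' = K) :=
  stmt_4_general M N L M₁ N₁ hM hL hdM hsM hdN hsN
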